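/- Let f : 𝒫₂(ℝ^k) → ℝ be W₂-Lipschitz with constant C, and let ξ ∈ L²(𝒫) be 𝒫-uniformly square integrable. Then 𝒫^f_{ξ} ≠ ∅, i.e., the supremum defining F_f(ξ) is attained by some P ∈ 𝒫. -/

import Mathlib

open MeasureTheory Filter Topology Set
open scoped ENNReal NNReal

noncomputable section

variable {Ω : Type*} [MeasurableSpace Ω] [TopologicalSpace Ω]

/-- A Borel map `ξ : Ω → E` belongs to `L²(𝒮)`: it is square integrable w.r.t. every `P ∈ 𝒮`
and approximable, uniformly over `𝒮` in `L²`-norm, by bounded continuous functions. -/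
def MemL2 (𝒮 : Set (ProbabilityMeasure Ω)) {E : Type*} [MeasurableSpace E]
    [NormedAddCommGroup E] (ξ : Ω → E) : Prop :=
  Measurable ξ ∧ (∀ P ∈ 𝒮, Integrable (fun ω => ‖ξ ω‖ ^ 2) (P : Measure Ω)) ∧
    ∀ δ : ℝ, 0 < δ → ∃ θ : BoundedContinuousFunction Ω E,
      ∀ P ∈ 𝒮, ∫ ω, ‖ξ ω - θ ω‖ ^ 2 ∂(P : Measure Ω) ≤ δ ^ 2

/-- `f` is `W₂`-Lipschitz with constant `C`: for every probability coupling `ρ` on `E × E`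
whose marginals have finite second moments, `|f(μ) − f(ν)| ≤ C (∫ |x−y|² ρ(dx,dy))^{1/2}`. -/
def W2Lipschitz {E : Type*} [MeasurableSpace E] [NormedAddCommGroup E]
    (f : Measure E → ℝ) (C : ℝ) : Prop :=
  ∀ ρ : Measure (E × E), IsProbabilityMeasure ρ →
    Integrable (fun p => ‖p.1‖ ^ 2) ρ → Integrable (fun p => ‖p.2‖ ^ 2) ρ →
    |f (ρ.map Prod.fst) - f (ρ.map Prod.snd)| ≤ C * Real.sqrt (∫ p, ‖p.1 - p.2‖ ^ 2 ∂ρ)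

/-- `F_f(ξ) = sup_{P ∈ 𝒮} f(P ∘ ξ⁻¹)`. -/
def Ff (𝒮 : Set (ProbabilityMeasure Ω)) {E : Type*} [MeasurableSpace E]
    (f : Measure E → ℝ) (ξ : Ω → E) : ℝ :=
  ⨆ P : 𝒮, f (((P : ProbabilityMeasure Ω) : Measure Ω).map ξ)

/-- `𝒫^f_{ξ} = {P ∈ 𝒮 : f(P ∘ ξ⁻¹) = F_f(ξ)}`. -/
def maximizersF (𝒮 : Set (ProbabilityMeasure Ω)) {E : Type*} [MeasurableSpace E]
    (f : Measure E → ℝ) (ξ : Ω → E) : Set (ProbabilityMeasure Ω) :=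
  {P ∈ 𝒮 | f ((P : Measure Ω).map ξ) = Ff 𝒮 f ξ}

section Helpers

lemma ennreal_div_mul_cancel_right {x b c : ℝ≥0∞} (hx0 : c = 0 → x = 0) (hc : c ≠ ∞) :
    x / (b * c) * c = x / b := by
  by_cases hc0 : c = 0
  · simp [hc0, hx0 hc0]
  · rw [div_eq_mul_inv, ENNReal.mul_inv (Or.inr hc) (Or.inr hc0), mul_assoc, mul_assoc,
      ENNReal.inv_mul_cancel hc0 hc, mul_one, ← div_eq_mul_inv]

lemma ennreal_div_mul_cancel_left {x b c : ℝ≥0∞} (hx0 : b = 0 → x = 0) (hb : b ≠ ∞) :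
    x / (b * c) * b = x / c := by
  rw [mul_comm b c]; exact ennreal_div_mul_cancel_right hx0 hb

lemma ennreal_sum_tsub_add {ι : Type*} (s : Finset ι) (f g : ι → ℝ≥0∞)
    (h : ∀ i ∈ s, g i ≤ f i) : (∑ i ∈ s, (f i - g i)) + ∑ i ∈ s, g i = ∑ i ∈ s, f i := by
  rw [← Finset.sum_add_distrib]
  exact Finset.sum_congr rfl fun i hi => tsub_add_cancel_of_le (h i hi)

lemma smul_div_add_smul_div {α : Type*} [MeasurableSpace α] {x y : ℝ≥0∞} (κ : Measure α)
    (h : x ≤ y) (hy : y ≠ ∞) (hy0 : y = 0 → κ = 0) :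
    (x / y) • κ + ((y - x) / y) • κ = κ := by
  by_cases h0 : y = 0
  · simp [hy0 h0]
  · rw [← add_smul, ENNReal.div_add_div_same, add_tsub_cancel_of_le h,
      ENNReal.div_self h0 hy, one_smul]

lemma map_finsetSum' {α β : Type*} [MeasurableSpace α] [MeasurableSpace β]
    {ι : Type*} (s : Finset ι) (μ : ι → Measure α) {g : α → β} (hg : Measurable g) :
    (∑ i ∈ s, μ i).map g = ∑ i ∈ s, (μ i).map g := by
  classical
  induction s using Finset.induction_on with
  | empty => simp
  | insert _ _ h ih =>
    rw [Finset.sum_insert h, Finset.sum_insert h, Measure.map_add _ _ hg, ih]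

lemma integral_le_of_ae_bound {α : Type*} [MeasurableSpace α] {μ : Measure α} [IsFiniteMeasure μ]
    {g : α → ℝ} (hg : AEStronglyMeasurable g μ) {c : ℝ}
    (h : ∀ᵐ x ∂μ, 0 ≤ g x ∧ g x ≤ c) :
    Integrable g μ ∧ ∫ x, g x ∂μ ≤ c * (μ Set.univ).toReal := by
  have hint : Integrable g μ := by
    refine Integrable.mono' (integrable_const c) hg ?_
    filter_upwards [h] with x hx
    rw [Real.norm_eq_abs, abs_of_nonneg hx.1]; exact hx.2
  refine ⟨hint, ?_⟩
  calc ∫ x, g x ∂μ ≤ ∫ _, c ∂μ := by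
        refine integral_mono_ae hint (integrable_const c) ?_
        filter_upwards [h] with x hx using hx.2
    _ = (μ Set.univ).toReal * c := by rw [integral_const]; simp [Measure.real]
    _ = c * (μ Set.univ).toReal := by ring

end Helpers

section Lem1

variable {E : Type*} [NormedAddCommGroup E] [MeasurableSpace E] [BorelSpace E]
  [SecondCountableTopology E]

theorem abs_sub_le_of_partition
    (f : Measure E → ℝ) (C : ℝ) (hC : 0 ≤ C) (hf : W2Lipschitz f C)
    (μ ν : Measure E) [IsProbabilityMeasure μ] [IsProbabilityMeasure ν]
    {m : ℕ} (A : Fin m → Set E) (hmeasA : ∀ i, MeasurableSet (A i))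
    (hdisj : Pairwise (Function.onFun Disjoint A))
    {R ε : ℝ} (hR : 0 ≤ R) (hε : 0 ≤ ε)
    (hball : ∀ i, A i ⊆ Metric.closedBall 0 R)
    (hdiam : ∀ i, ∀ x ∈ A i, ∀ y ∈ A i, ‖x - y‖ ≤ ε)
    (hμU : μ (⋃ i, A i)ᶜ = 0) (hνU : ν (⋃ i, A i)ᶜ = 0) :
    |f μ - f ν| ≤ C * Real.sqrt (ε ^ 2 +
      (2 * R) ^ 2 * ∑ i, |(μ (A i)).toReal - (ν (A i)).toReal|) := by
  classical
  have hpne : ∀ i, μ (A i) ≠ ∞ := fun i => (measure_lt_top μ _).ne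
  have hqne : ∀ i, ν (A i) ≠ ∞ := fun i => (measure_lt_top ν _).ne
  have hwp : ∀ i, min (μ (A i)) (ν (A i)) ≤ μ (A i) := fun i => min_le_left _ _
  have hwq : ∀ i, min (μ (A i)) (ν (A i)) ≤ ν (A i) := fun i => min_le_right _ _
  have hwne : ∀ i, min (μ (A i)) (ν (A i)) ≠ ∞ :=
    fun i => (lt_of_le_of_lt (hwp i) (measure_lt_top μ _)).ne
  -- sum of restrictions recovers the measure
  have key_restrict : ∀ (κ : Measure E), κ (⋃ i, A i)ᶜ = 0 →
      ∑ i, κ.restrict (A i) = κ := by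
    intro κ hκ
    ext s hs
    rw [Measure.finset_sum_apply]
    rw [Finset.sum_congr rfl (fun i _ => Measure.restrict_apply hs)]
    have h2 : ∑ i, κ (s ∩ A i) = κ (⋃ i, s ∩ A i) := by
      rw [measure_iUnion (fun i j hij => (hdisj hij).mono inter_subset_right inter_subset_right)
        (fun i => hs.inter (hmeasA i)), tsum_fintype]
    rw [h2, ← inter_iUnion]
    have hle : κ s ≤ κ (s ∩ ⋃ i, A i) := by
      have hsub : s ⊆ (s ∩ ⋃ i, A i) ∪ (⋃ i, A i)ᶜ := by
        intro x hx
        by_cases hxu : x ∈ ⋃ i, A i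
        · exact Or.inl ⟨hx, hxu⟩
        · exact Or.inr hxu
      calc κ s ≤ κ ((s ∩ ⋃ i, A i) ∪ (⋃ i, A i)ᶜ) := measure_mono hsub
        _ ≤ κ (s ∩ ⋃ i, A i) + κ (⋃ i, A i)ᶜ := measure_union_le _ _
        _ = κ (s ∩ ⋃ i, A i) := by rw [hκ, add_zero]
    exact le_antisymm (measure_mono inter_subset_left) hle
  have hsum_res_mu : ∑ i, μ.restrict (A i) = μ := key_restrict μ hμU
  have hsum_res_nu : ∑ i, ν.restrict (A i) = ν := key_restrict ν hνU
  have hsump : ∑ i, μ (A i) = 1 := by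
    have := congrArg (fun κ : Measure E => κ Set.univ) hsum_res_mu
    simpa [Measure.finset_sum_apply, Measure.restrict_apply_univ] using this
  have hsumq : ∑ i, ν (A i) = 1 := by
    have := congrArg (fun κ : Measure E => κ Set.univ) hsum_res_nu
    simpa [Measure.finset_sum_apply, Measure.restrict_apply_univ] using this
  have hsumw_ne : (∑ i, min (μ (A i)) (ν (A i))) ≠ ∞ := by
    refine (lt_of_le_of_lt (le_of_le_of_eq (Finset.sum_le_sum fun i _ => hwp i) hsump) ?_).ne
    norm_num
  have hsum_pw : (∑ i, (μ (A i) - min (μ (A i)) (ν (A i))))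
      + ∑ i, min (μ (A i)) (ν (A i)) = 1 := by
    rw [ennreal_sum_tsub_add _ _ _ (fun i _ => hwp i), hsump]
  have hsum_qw_eq : (∑ i, (ν (A i) - min (μ (A i)) (ν (A i))))
      + ∑ i, min (μ (A i)) (ν (A i)) = 1 := by
    rw [ennreal_sum_tsub_add _ _ _ (fun i _ => hwq i), hsumq]
  have hsum_qw : ∑ i, (ν (A i) - min (μ (A i)) (ν (A i)))
      = ∑ i, (μ (A i) - min (μ (A i)) (ν (A i))) :=
    (ENNReal.add_left_inj hsumw_ne).mp (hsum_qw_eq.trans hsum_pw.symm)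
  set r : ℝ≥0∞ := ∑ i, (μ (A i) - min (μ (A i)) (ν (A i))) with hrdef
  have hrle : r ≤ 1 := hsum_pw ▸ le_add_right le_rfl
  have hrne : r ≠ ∞ := (lt_of_le_of_lt hrle (by norm_num)).ne
  -- the pieces of the coupling
  set γ : Measure E :=
    ∑ i, ((μ (A i) - min (μ (A i)) (ν (A i))) / μ (A i)) • μ.restrict (A i) with hγdef
  set δ : Measure E :=
    ∑ i, ((ν (A i) - min (μ (A i)) (ν (A i))) / ν (A i)) • ν.restrict (A i) with hδdef
  have hγuniv : γ Set.univ = r := by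
    rw [hγdef, Measure.finset_sum_apply, hrdef]
    refine Finset.sum_congr rfl (fun i _ => ?_)
    rw [Measure.smul_apply, Measure.restrict_apply_univ, smul_eq_mul]
    by_cases hp0 : μ (A i) = 0
    · have hw0 : μ (A i) - min (μ (A i)) (ν (A i)) = 0 := by
        rw [hp0]; simpa using (hp0 ▸ hwp i : min (μ (A i)) (ν (A i)) ≤ 0)
      simp [hp0, hw0]
    · exact ENNReal.div_mul_cancel hp0 (hpne i)
  have hδuniv : δ Set.univ = r := by
    rw [hδdef, Measure.finset_sum_apply, ← hsum_qw]
    refine Finset.sum_congr rfl (fun i _ => ?_)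
    rw [Measure.smul_apply, Measure.restrict_apply_univ, smul_eq_mul]
    by_cases hq0 : ν (A i) = 0
    · have hw0 : ν (A i) - min (μ (A i)) (ν (A i)) = 0 := by
        rw [hq0]; simp
      simp [hq0, hw0]
    · exact ENNReal.div_mul_cancel hq0 (hqne i)
  haveI : IsFiniteMeasure γ := ⟨by rw [hγuniv]; exact lt_of_le_of_lt hrle (by norm_num)⟩
  haveI : IsFiniteMeasure δ := ⟨by rw [hδuniv]; exact lt_of_le_of_lt hrle (by norm_num)⟩
  have hγ0 : r = 0 → γ = 0 := by
    intro hr0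
    have h0 : ∀ i ∈ (Finset.univ : Finset (Fin m)),
        μ (A i) - min (μ (A i)) (ν (A i)) = 0 := Finset.sum_eq_zero_iff.mp (hrdef ▸ hr0)
    rw [hγdef]
    refine Finset.sum_eq_zero (fun i _ => ?_)
    rw [h0 i (Finset.mem_univ i), ENNReal.zero_div, zero_smul]
  have hδ0 : r = 0 → δ = 0 := by
    intro hr0
    have h0 : ∀ i ∈ (Finset.univ : Finset (Fin m)),
        ν (A i) - min (μ (A i)) (ν (A i)) = 0 :=
      Finset.sum_eq_zero_iff.mp (hsum_qw.trans (hrdef ▸ hr0))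
    rw [hδdef]
    refine Finset.sum_eq_zero (fun i _ => ?_)
    rw [h0 i (Finset.mem_univ i), ENNReal.zero_div, zero_smul]
  set ρ₁ : Measure (E × E) :=
    ∑ i, (min (μ (A i)) (ν (A i)) / (μ (A i) * ν (A i))) •
      ((μ.restrict (A i)).prod (ν.restrict (A i))) with hρ₁def
  set ρ : Measure (E × E) := ρ₁ + r⁻¹ • (γ.prod δ) with hρdef
  -- first marginal
  have hmapfst : ρ.map Prod.fst = μ := by
    rw [hρdef, Measure.map_add _ _ measurable_fst, hρ₁def,
      map_finsetSum' _ _ measurable_fst, Measure.map_smul, Measure.map_fst_prod, hδuniv]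
    have h1 : ∀ i ∈ (Finset.univ : Finset (Fin m)),
        ((min (μ (A i)) (ν (A i)) / (μ (A i) * ν (A i))) •
            ((μ.restrict (A i)).prod (ν.restrict (A i)))).map Prod.fst
          = (min (μ (A i)) (ν (A i)) / μ (A i)) • μ.restrict (A i) := by
      intro i _
      rw [Measure.map_smul, Measure.map_fst_prod, Measure.restrict_apply_univ, smul_smul]
      congr 1
      refine ennreal_div_mul_cancel_right (fun hq0 => ?_) (hqne i)
      rw [hq0]; simp
    rw [Finset.sum_congr rfl h1]
    have h2 : r⁻¹ • (r • γ) = γ := by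
      by_cases hr0 : r = 0
      · rw [hγ0 hr0]; simp
      · rw [smul_smul, ENNReal.inv_mul_cancel hr0 hrne, one_smul]
    rw [smul_smul, ← smul_smul, h2, hγdef, ← Finset.sum_add_distrib]
    rw [Finset.sum_congr rfl (fun i _ => smul_div_add_smul_div (μ.restrict (A i)) (hwp i)
      (hpne i) (fun h0 => Measure.restrict_eq_zero.2 h0))]
    exact hsum_res_mu
  -- second marginal
  have hmapsnd : ρ.map Prod.snd = ν := by
    rw [hρdef, Measure.map_add _ _ measurable_snd, hρ₁def,
      map_finsetSum' _ _ measurable_snd, Measure.map_smul, Measure.map_snd_prod, hγuniv]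
    have h1 : ∀ i ∈ (Finset.univ : Finset (Fin m)),
        ((min (μ (A i)) (ν (A i)) / (μ (A i) * ν (A i))) •
            ((μ.restrict (A i)).prod (ν.restrict (A i)))).map Prod.snd
          = (min (μ (A i)) (ν (A i)) / ν (A i)) • ν.restrict (A i) := by
      intro i _
      rw [Measure.map_smul, Measure.map_snd_prod, Measure.restrict_apply_univ, smul_smul]
      congr 1
      refine ennreal_div_mul_cancel_left (fun hp0 => ?_) (hpne i)
      rw [hp0]; simp
    rw [Finset.sum_congr rfl h1]
    have h2 : r⁻¹ • (r • δ) = δ := by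
      by_cases hr0 : r = 0
      · rw [hδ0 hr0]; simp
      · rw [smul_smul, ENNReal.inv_mul_cancel hr0 hrne, one_smul]
    rw [smul_smul, ← smul_smul, h2, hδdef, ← Finset.sum_add_distrib]
    rw [Finset.sum_congr rfl (fun i _ => smul_div_add_smul_div (ν.restrict (A i)) (hwq i)
      (hqne i) (fun h0 => Measure.restrict_eq_zero.2 h0))]
    exact hsum_res_nu
  haveI hprob : IsProbabilityMeasure ρ := by
    constructor
    have h : ρ Set.univ = (ρ.map Prod.fst) Set.univ := by
      rw [Measure.map_apply measurable_fst MeasurableSet.univ, preimage_univ]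
    rw [h, hmapfst]; exact measure_univ
  have hUB : (⋃ i, A i) ⊆ Metric.closedBall (0:E) R := iUnion_subset hball
  -- a.e. bounds on the coordinates of ρ
  have haefst : ∀ᵐ pt ∂ρ, ‖pt.1‖ ≤ R := by
    rw [ae_iff]
    refine le_antisymm ?_ zero_le
    have hsub : {pt : E × E | ¬ ‖pt.1‖ ≤ R} ⊆ Prod.fst ⁻¹' (Metric.closedBall (0:E) R)ᶜ := by
      intro pt hpt
      simp only [mem_preimage, mem_compl_iff, Metric.mem_closedBall, dist_zero_right]
      exact hpt
    calc ρ {pt : E × E | ¬ ‖pt.1‖ ≤ R}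
        ≤ ρ (Prod.fst ⁻¹' (Metric.closedBall (0:E) R)ᶜ) := measure_mono hsub
      _ = (ρ.map Prod.fst) (Metric.closedBall (0:E) R)ᶜ := by
          rw [Measure.map_apply measurable_fst
            measurableSet_closedBall.compl]
      _ = μ (Metric.closedBall (0:E) R)ᶜ := by rw [hmapfst]
      _ ≤ μ (⋃ i, A i)ᶜ := measure_mono (compl_subset_compl.2 hUB)
      _ = 0 := hμU
  have haesnd : ∀ᵐ pt ∂ρ, ‖pt.2‖ ≤ R := by
    rw [ae_iff]
    refine le_antisymm ?_ zero_le
    have hsub : {pt : E × E | ¬ ‖pt.2‖ ≤ R} ⊆ Prod.snd ⁻¹' (Metric.closedBall (0:E) R)ᶜ := by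
      intro pt hpt
      simp only [mem_preimage, mem_compl_iff, Metric.mem_closedBall, dist_zero_right]
      exact hpt
    calc ρ {pt : E × E | ¬ ‖pt.2‖ ≤ R}
        ≤ ρ (Prod.snd ⁻¹' (Metric.closedBall (0:E) R)ᶜ) := measure_mono hsub
      _ = (ρ.map Prod.snd) (Metric.closedBall (0:E) R)ᶜ := by
          rw [Measure.map_apply measurable_snd
            measurableSet_closedBall.compl]
      _ = ν (Metric.closedBall (0:E) R)ᶜ := by rw [hmapsnd]
      _ ≤ ν (⋃ i, A i)ᶜ := measure_mono (compl_subset_compl.2 hUB)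
      _ = 0 := hνU
  have hint1 : Integrable (fun pt : E × E => ‖pt.1‖ ^ 2) ρ := by
    refine Integrable.mono' (integrable_const (R ^ 2))
      ((continuous_fst.norm.pow 2).aestronglyMeasurable) ?_
    filter_upwards [haefst] with pt hpt
    rw [Real.norm_eq_abs, abs_of_nonneg (by positivity)]
    exact pow_le_pow_left₀ (norm_nonneg _) hpt 2
  have hint2 : Integrable (fun pt : E × E => ‖pt.2‖ ^ 2) ρ := by
    refine Integrable.mono' (integrable_const (R ^ 2))
      ((continuous_snd.norm.pow 2).aestronglyMeasurable) ?_
    filter_upwards [haesnd] with pt hpt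
    rw [Real.norm_eq_abs, abs_of_nonneg (by positivity)]
    exact pow_le_pow_left₀ (norm_nonneg _) hpt 2
  -- the transport cost function
  set g : E × E → ℝ := fun pt => ‖pt.1 - pt.2‖ ^ 2 with hgdef
  have hgsm : ∀ (κ : Measure (E × E)), AEStronglyMeasurable g κ :=
    fun κ => ((continuous_fst.sub continuous_snd).norm.pow 2).aestronglyMeasurable
  -- bound on the diagonal pieces
  have hdiag : ∀ i : Fin m, Integrable g ((μ.restrict (A i)).prod (ν.restrict (A i))) ∧
      ∫ pt, g pt ∂((μ.restrict (A i)).prod (ν.restrict (A i)))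
        ≤ ε ^ 2 * (((μ.restrict (A i)).prod (ν.restrict (A i))) Set.univ).toReal := by
    intro i
    refine integral_le_of_ae_bound (hgsm _) ?_
    have hmem : ∀ᵐ pt ∂((μ.restrict (A i)).prod (ν.restrict (A i))),
        pt.1 ∈ A i ∧ pt.2 ∈ A i := by
      rw [ae_iff]
      refine le_antisymm ?_ zero_le
      have hsub : {pt : E × E | ¬ (pt.1 ∈ A i ∧ pt.2 ∈ A i)}
          ⊆ ((A i)ᶜ ×ˢ Set.univ) ∪ (Set.univ ×ˢ (A i)ᶜ) := by
        intro pt hpt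
        rcases not_and_or.mp hpt with h | h
        · exact Or.inl ⟨h, mem_univ _⟩
        · exact Or.inr ⟨mem_univ _, h⟩
      calc ((μ.restrict (A i)).prod (ν.restrict (A i))) {pt : E × E | ¬ (pt.1 ∈ A i ∧ pt.2 ∈ A i)}
          ≤ ((μ.restrict (A i)).prod (ν.restrict (A i))) (((A i)ᶜ ×ˢ Set.univ) ∪ (Set.univ ×ˢ (A i)ᶜ)) :=
            measure_mono hsub
        _ ≤ ((μ.restrict (A i)).prod (ν.restrict (A i))) ((A i)ᶜ ×ˢ Set.univ)
            + ((μ.restrict (A i)).prod (ν.restrict (A i))) (Set.univ ×ˢ (A i)ᶜ) :=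
            measure_union_le _ _
        _ = 0 := by
            rw [Measure.prod_prod, Measure.prod_prod,
              Measure.restrict_apply (hmeasA i).compl, compl_inter_self,
              Measure.restrict_apply (hmeasA i).compl, compl_inter_self]
            simp
    filter_upwards [hmem] with pt hpt
    exact ⟨by positivity, pow_le_pow_left₀ (norm_nonneg _) (hdiam i _ hpt.1 _ hpt.2) 2⟩
  -- bound on the off-diagonal piece
  have hγUc : γ (⋃ i, A i)ᶜ = 0 := by
    rw [hγdef, Measure.finset_sum_apply]
    refine Finset.sum_eq_zero (fun i _ => ?_)
    rw [Measure.smul_apply,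
      Measure.restrict_apply (MeasurableSet.iUnion (fun j => hmeasA j)).compl]
    have hempty : (⋃ j, A j)ᶜ ∩ A i = ∅ :=
      eq_empty_iff_forall_notMem.mpr (fun x hx => hx.1 (mem_iUnion.2 ⟨i, hx.2⟩))
    rw [hempty, measure_empty, smul_zero]
  have hδUc : δ (⋃ i, A i)ᶜ = 0 := by
    rw [hδdef, Measure.finset_sum_apply]
    refine Finset.sum_eq_zero (fun i _ => ?_)
    rw [Measure.smul_apply,
      Measure.restrict_apply (MeasurableSet.iUnion (fun j => hmeasA j)).compl]
    have hempty : (⋃ j, A j)ᶜ ∩ A i = ∅ :=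
      eq_empty_iff_forall_notMem.mpr (fun x hx => hx.1 (mem_iUnion.2 ⟨i, hx.2⟩))
    rw [hempty, measure_empty, smul_zero]
  have hoff : Integrable g (γ.prod δ) ∧
      ∫ pt, g pt ∂(γ.prod δ) ≤ (2 * R) ^ 2 * ((γ.prod δ) Set.univ).toReal := by
    refine integral_le_of_ae_bound (hgsm _) ?_
    have hmem : ∀ᵐ pt ∂(γ.prod δ), pt.1 ∈ (⋃ i, A i) ∧ pt.2 ∈ (⋃ i, A i) := by
      rw [ae_iff]
      refine le_antisymm ?_ zero_le
      have hsub : {pt : E × E | ¬ (pt.1 ∈ (⋃ i, A i) ∧ pt.2 ∈ (⋃ i, A i))}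
          ⊆ ((⋃ i, A i)ᶜ ×ˢ Set.univ) ∪ (Set.univ ×ˢ (⋃ i, A i)ᶜ) := by
        intro pt hpt
        rcases not_and_or.mp hpt with h | h
        · exact Or.inl ⟨h, mem_univ _⟩
        · exact Or.inr ⟨mem_univ _, h⟩
      calc (γ.prod δ) {pt : E × E | ¬ (pt.1 ∈ (⋃ i, A i) ∧ pt.2 ∈ (⋃ i, A i))}
          ≤ (γ.prod δ) (((⋃ i, A i)ᶜ ×ˢ Set.univ) ∪ (Set.univ ×ˢ (⋃ i, A i)ᶜ)) :=
            measure_mono hsub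
        _ ≤ (γ.prod δ) ((⋃ i, A i)ᶜ ×ˢ Set.univ) + (γ.prod δ) (Set.univ ×ˢ (⋃ i, A i)ᶜ) :=
            measure_union_le _ _
        _ = 0 := by rw [Measure.prod_prod, Measure.prod_prod, hγUc, hδUc]; simp
    filter_upwards [hmem] with pt hpt
    refine ⟨by positivity, ?_⟩
    have h1 : ‖pt.1‖ ≤ R := by
      have := hUB hpt.1; rwa [Metric.mem_closedBall, dist_zero_right] at this
    have h2 : ‖pt.2‖ ≤ R := by
      have := hUB hpt.2; rwa [Metric.mem_closedBall, dist_zero_right] at this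
    have hn : ‖pt.1 - pt.2‖ ≤ 2 * R := by
      calc ‖pt.1 - pt.2‖ ≤ ‖pt.1‖ + ‖pt.2‖ := norm_sub_le _ _
        _ ≤ 2 * R := by linarith
    exact pow_le_pow_left₀ (norm_nonneg _) hn 2
  -- finiteness of the scalar coefficients
  have hcne : ∀ i : Fin m, min (μ (A i)) (ν (A i)) / (μ (A i) * ν (A i)) ≠ ∞ := by
    intro i
    by_cases hp0 : μ (A i) = 0
    · rw [hp0]; simp
    · by_cases hq0 : ν (A i) = 0
      · rw [hq0]; simp
      · exact (ENNReal.div_lt_top (hwne i) (mul_ne_zero hp0 hq0)).ne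
  have hint_ρ₁ : Integrable g ρ₁ := by
    rw [hρ₁def]
    refine integrable_finset_sum_measure.2 (fun i _ => ?_)
    exact ((hdiag i).1).smul_measure (hcne i)
  have hint_off : Integrable g (r⁻¹ • γ.prod δ) := by
    by_cases hr0 : r = 0
    · have : γ.prod δ = 0 := by rw [hγ0 hr0, Measure.zero_prod]
      rw [this, smul_zero]
      exact integrable_zero_measure
    · exact (hoff.1).smul_measure (by simp [hr0])
  -- the cost estimate
  have hsumw_le : ∑ i, (min (μ (A i)) (ν (A i))).toReal ≤ 1 := by
    rw [← ENNReal.toReal_sum (fun i _ => hwne i)]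
    have h1 : (∑ i, min (μ (A i)) (ν (A i))) ≤ 1 :=
      le_of_le_of_eq (Finset.sum_le_sum fun i _ => hwp i) hsump
    simpa using ENNReal.toReal_mono (by norm_num) h1
  have hrre : r.toReal ≤ ∑ i, |(μ (A i)).toReal - (ν (A i)).toReal| := by
    rw [hrdef, ENNReal.toReal_sum (fun i _ => (tsub_le_self.trans_lt (measure_lt_top μ _)).ne)]
    refine Finset.sum_le_sum (fun i _ => ?_)
    rw [ENNReal.toReal_sub_of_le (hwp i) (hpne i), ENNReal.toReal_min (hpne i) (hqne i)]
    rcases le_total ((μ (A i)).toReal) ((ν (A i)).toReal) with h | h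
    · rw [min_eq_left h, sub_self]; exact abs_nonneg _
    · rw [min_eq_right h]; exact le_abs_self _
  -- putting the integral bound together
  have hcost : ∫ pt, g pt ∂ρ ≤ ε ^ 2 +
      (2 * R) ^ 2 * ∑ i, |(μ (A i)).toReal - (ν (A i)).toReal| := by
    rw [hρdef, integral_add_measure hint_ρ₁ hint_off]
    have hpart1 : ∫ pt, g pt ∂ρ₁ ≤ ε ^ 2 := by
      rw [hρ₁def, integral_finset_sum_measure (fun i _ => ((hdiag i).1).smul_measure (hcne i))]
      have hterm : ∀ i ∈ (Finset.univ : Finset (Fin m)),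
          ∫ pt, g pt ∂((min (μ (A i)) (ν (A i)) / (μ (A i) * ν (A i))) •
            ((μ.restrict (A i)).prod (ν.restrict (A i))))
          ≤ ε ^ 2 * (min (μ (A i)) (ν (A i))).toReal := by
        intro i _
        rw [integral_smul_measure, smul_eq_mul]
        calc (min (μ (A i)) (ν (A i)) / (μ (A i) * ν (A i))).toReal
              * ∫ pt, g pt ∂((μ.restrict (A i)).prod (ν.restrict (A i)))
            ≤ (min (μ (A i)) (ν (A i)) / (μ (A i) * ν (A i))).toReal
              * (ε ^ 2 * (((μ.restrict (A i)).prod (ν.restrict (A i))) Set.univ).toReal) :=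
              mul_le_mul_of_nonneg_left (hdiag i).2 ENNReal.toReal_nonneg
          _ = ε ^ 2 * ((min (μ (A i)) (ν (A i)) / (μ (A i) * ν (A i)))
              * (((μ.restrict (A i)).prod (ν.restrict (A i))) Set.univ)).toReal := by
              rw [ENNReal.toReal_mul]; ring
          _ = ε ^ 2 * (min (μ (A i)) (ν (A i))).toReal := by
              congr 2
              rw [← univ_prod_univ, Measure.prod_prod,
                Measure.restrict_apply_univ, Measure.restrict_apply_univ]
              by_cases hp0 : μ (A i) = 0
              · rw [hp0]; simp
              · by_cases hq0 : ν (A i) = 0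
                · rw [hq0]; simp
                · exact ENNReal.div_mul_cancel (mul_ne_zero hp0 hq0)
                    (ENNReal.mul_ne_top (hpne i) (hqne i))
      calc ∑ i, ∫ pt, g pt ∂((min (μ (A i)) (ν (A i)) / (μ (A i) * ν (A i))) •
              ((μ.restrict (A i)).prod (ν.restrict (A i))))
            ≤ ∑ i, ε ^ 2 * (min (μ (A i)) (ν (A i))).toReal := Finset.sum_le_sum hterm
        _ = ε ^ 2 * ∑ i, (min (μ (A i)) (ν (A i))).toReal := by rw [Finset.mul_sum]
        _ ≤ ε ^ 2 * 1 := mul_le_mul_of_nonneg_left hsumw_le (by positivity)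
        _ = ε ^ 2 := mul_one _
    have hpart2 : ∫ pt, g pt ∂(r⁻¹ • γ.prod δ)
        ≤ (2 * R) ^ 2 * ∑ i, |(μ (A i)).toReal - (ν (A i)).toReal| := by
      rw [integral_smul_measure, smul_eq_mul]
      calc r⁻¹.toReal * ∫ pt, g pt ∂(γ.prod δ)
          ≤ r⁻¹.toReal * ((2 * R) ^ 2 * ((γ.prod δ) Set.univ).toReal) :=
            mul_le_mul_of_nonneg_left hoff.2 ENNReal.toReal_nonneg
        _ = (2 * R) ^ 2 * (r⁻¹ * ((γ.prod δ) Set.univ)).toReal := by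
            rw [ENNReal.toReal_mul]; ring
        _ = (2 * R) ^ 2 * r.toReal := by
            congr 2
            rw [← univ_prod_univ, Measure.prod_prod, hγuniv, hδuniv]
            by_cases hr0 : r = 0
            · rw [hr0]; simp
            · rw [← mul_assoc, ENNReal.inv_mul_cancel hr0 hrne, one_mul]
        _ ≤ (2 * R) ^ 2 * ∑ i, |(μ (A i)).toReal - (ν (A i)).toReal| :=
            mul_le_mul_of_nonneg_left hrre (by positivity)
    exact add_le_add hpart1 hpart2
  -- apply the Lipschitz hypothesis
  refine le_trans ?_ (mul_le_mul_of_nonneg_left (Real.sqrt_le_sqrt hcost) hC)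
  have hmain := hf ρ hprob hint1 hint2
  rwa [hmapfst, hmapsnd] at hmain





end Lem1

lemma frontier_iUnion_subset' {X ι : Type*} [TopologicalSpace X] [Finite ι] (B : ι → Set X) :
    frontier (⋃ i, B i) ⊆ ⋃ i, frontier (B i) := by
  intro x hx
  have hcl : closure (⋃ i, B i) ⊆ ⋃ i, closure (B i) :=
    closure_minimal (iUnion_mono fun i => subset_closure)
      (isClosed_iUnion_of_finite fun i => isClosed_closure)
  obtain ⟨j, hj⟩ := mem_iUnion.mp (hcl hx.1)
  refine mem_iUnion.mpr ⟨j, hj, fun hint => hx.2 ?_⟩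
  exact interior_mono (subset_iUnion B j) hint

section Lem2

variable {E : Type*} [NormedAddCommGroup E] [MeasurableSpace E] [BorelSpace E]

lemma exists_partition (ν : Measure E) [IsFiniteMeasure ν]
    {K : Set E} (hK : IsCompact K) {R₀ : ℝ} (hKB : K ⊆ Metric.closedBall 0 R₀)
    {ε : ℝ} (hε : 0 < ε) :
    ∃ (m : ℕ) (A : Fin m → Set E), (∀ i, MeasurableSet (A i)) ∧
      Pairwise (Function.onFun Disjoint A) ∧
      (∀ i, A i ⊆ Metric.closedBall 0 (R₀ + ε)) ∧
      (∀ i, ∀ x ∈ A i, ∀ y ∈ A i, ‖x - y‖ ≤ ε) ∧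
      (∀ i, ν (frontier (A i)) = 0) ∧
      K ⊆ ⋃ i, A i := by
  classical
  obtain ⟨t, htK, htcov⟩ := hK.elim_nhds_subcover (fun x => Metric.ball x (ε / 4))
    (fun x _ => Metric.ball_mem_nhds x (by positivity))
  set m := t.card with hm
  set c : Fin m → E := fun i => (t.equivFin.symm i : E) with hc
  have hcK : ∀ i, c i ∈ K := fun i => htK _ (t.equivFin.symm i).2
  have hrad := fun i : Fin m =>
    exists_null_frontier_thickening ν {c i} (show ε / 4 < ε / 2 by linarith)
  choose rad hradIoo hradnull using hrad
  have hradnull' : ∀ i, ν (frontier (Metric.ball (c i) (rad i))) = 0 := by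
    intro i
    have := hradnull i
    rwa [Metric.thickening_singleton] at this
  set B : Fin m → Set E := fun i => Metric.ball (c i) (rad i) with hB
  set A : Fin m → Set E := fun i => B i \ ⋃ j, ⋃ (_ : j < i), B j with hA
  have hAB : ∀ i, A i ⊆ B i := fun i => diff_subset
  refine ⟨m, A, ?_, ?_, ?_, ?_, ?_, ?_⟩
  · intro i
    exact (Metric.isOpen_ball.measurableSet).diff
      (MeasurableSet.iUnion fun j => MeasurableSet.iUnion fun _ =>
        Metric.isOpen_ball.measurableSet)
  · -- pairwise disjoint
    have key : ∀ i j : Fin m, i < j → ∀ x, x ∈ A i → x ∈ A j → False := by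
      intro i j hij x hxi hxj
      exact hxj.2 (mem_iUnion.mpr ⟨i, mem_iUnion.mpr ⟨hij, hxi.1⟩⟩)
    intro i j hij
    rcases hij.lt_or_gt with h | h
    · exact Set.disjoint_left.mpr fun x hxi hxj => key i j h x hxi hxj
    · exact Set.disjoint_left.mpr fun x hxi hxj => key j i h x hxj hxi
  · -- inside big ball
    intro i z hz
    have hz' : dist z (c i) < rad i := (hAB i) hz
    have h1 : dist (c i) 0 ≤ R₀ := by
      have := hKB (hcK i); rwa [Metric.mem_closedBall] at this
    have h2 : rad i < ε / 2 := (hradIoo i).2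
    rw [Metric.mem_closedBall]
    calc dist z 0 ≤ dist z (c i) + dist (c i) 0 := dist_triangle _ _ _
      _ ≤ R₀ + ε := by linarith
  · -- small diameter
    intro i x hx y hy
    have hx' : dist x (c i) < rad i := (hAB i) hx
    have hy' : dist y (c i) < rad i := (hAB i) hy
    have h2 : rad i < ε / 2 := (hradIoo i).2
    have : dist x y ≤ dist x (c i) + dist (c i) y := dist_triangle _ _ _
    rw [dist_comm (c i) y] at this
    rw [← dist_eq_norm]
    linarith
  · -- null frontier
    intro i
    have hsub : frontier (A i) ⊆ frontier (B i) ∪ ⋃ j, frontier (B j) := by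
      have h1 : A i = B i ∩ (⋃ j, ⋃ (_ : j < i), B j)ᶜ := rfl
      rw [h1]
      refine (frontier_inter_subset _ _).trans ?_
      have h2 : frontier ((⋃ j, ⋃ (_ : j < i), B j)ᶜ) = frontier (⋃ j, ⋃ (_ : j < i), B j) :=
        frontier_compl _
      have h3 : frontier (⋃ j, ⋃ (_ : j < i), B j) ⊆ ⋃ j, frontier (B j) := by
        refine (frontier_iUnion_subset' _).trans (iUnion_mono fun j => ?_)
        by_cases hj : j < i
        · simp [hj]
        · simp [hj]
      intro x hx
      rcases hx with hx | hx
      · exact Or.inl hx.1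
      · exact Or.inr (h3 (h2 ▸ hx.2))
    refine le_antisymm ?_ zero_le
    calc ν (frontier (A i)) ≤ ν (frontier (B i) ∪ ⋃ j, frontier (B j)) := measure_mono hsub
      _ = 0 := measure_union_null (hradnull' i) (measure_iUnion_null fun j => hradnull' j)
  · -- cover
    intro y hy
    have hyB : ∃ i, y ∈ B i := by
      obtain ⟨x, hxt, hx⟩ := mem_iUnion₂.mp (htcov hy)
      refine ⟨t.equivFin ⟨x, hxt⟩, ?_⟩
      have hcx : c (t.equivFin ⟨x, hxt⟩) = x := by
        rw [hc]; simp
      rw [hB]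
      simp only [Metric.mem_ball, hcx]
      have h4 : dist y x < ε / 4 := by
        simpa [Metric.mem_ball] using hx
      exact h4.trans (hradIoo _).1
    set S : Finset (Fin m) := Finset.univ.filter (fun i => y ∈ B i) with hS
    have hSne : S.Nonempty := by
      obtain ⟨i, hi⟩ := hyB
      exact ⟨i, by simp [hS, hi]⟩
    set i₀ := S.min' hSne with hi₀
    have hyi₀ : y ∈ B i₀ := by
      have := S.min'_mem hSne
      simp only [hS, Finset.mem_filter] at this
      exact this.2
    refine mem_iUnion.mpr ⟨i₀, hyi₀, ?_⟩
    intro hmem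
    obtain ⟨j, hj⟩ := mem_iUnion.mp hmem
    obtain ⟨hji, hyj⟩ := mem_iUnion.mp hj
    have : i₀ ≤ j := S.min'_le j (by simp [hS, hyj])
    exact absurd hji (not_lt.mpr this)

end Lem2

section Lem3

variable {Ω' : Type*} [MeasurableSpace Ω'] [TopologicalSpace Ω'] [PolishSpace Ω'] [BorelSpace Ω']
variable {E : Type*} [NormedAddCommGroup E] [MeasurableSpace E] [BorelSpace E]
  [SecondCountableTopology E] [ProperSpace E]

lemma continuous_f_map (f : Measure E → ℝ) (C : ℝ) (hC : 0 ≤ C) (hf : W2Lipschitz f C)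
    (θ : BoundedContinuousFunction Ω' E) :
    Continuous fun P : ProbabilityMeasure Ω' => f ((P : Measure Ω').map θ) := by
  rw [continuous_iff_seqContinuous]
  intro Ps P hPs
  have hmap := ProbabilityMeasure.tendsto_map_of_tendsto_of_continuous Ps P hPs θ.continuous
  set νs : ℕ → ProbabilityMeasure E :=
    fun n => (Ps n).map θ.continuous.measurable.aemeasurable with hνs
  set ν : ProbabilityMeasure E := P.map θ.continuous.measurable.aemeasurable with hν
  have hrw : ∀ Q : ProbabilityMeasure Ω',
      (Q : Measure Ω').map θ = ((Q.map θ.continuous.measurable.aemeasurable : ProbabilityMeasure E) : Measure E) := by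
    intro Q; rw [ProbabilityMeasure.toMeasure_map]
  -- supports
  have hsupp : ∀ Q : ProbabilityMeasure Ω',
      ((Q.map θ.continuous.measurable.aemeasurable : ProbabilityMeasure E) : Measure E)
        (Metric.closedBall (0:E) ‖θ‖)ᶜ = 0 := by
    intro Q
    rw [ProbabilityMeasure.toMeasure_map,
      Measure.map_apply θ.continuous.measurable measurableSet_closedBall.compl]
    have hempty : (⇑θ) ⁻¹' (Metric.closedBall (0:E) ‖θ‖)ᶜ = ∅ := by
      refine eq_empty_iff_forall_notMem.mpr (fun ω hω => ?_)
      refine hω ?_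
      rw [Metric.mem_closedBall, dist_zero_right]
      exact θ.norm_coe_le_norm ω
    rw [hempty, measure_empty]
  show Tendsto (fun n => f ((Ps n : Measure Ω').map θ)) atTop (𝓝 (f ((P : Measure Ω').map θ)))
  simp only [hrw]
  rw [Metric.tendsto_atTop]
  intro ε' hε'
  set ε := ε' / (2 * (C + 1)) with hεdef
  have hεpos : 0 < ε := by
    apply div_pos hε'; positivity
  -- partition adapted to ν
  obtain ⟨m, A, hmeasA, hdisj, hball, hdiam, hfr, hcov⟩ :=
    exists_partition (ν : Measure E) (isCompact_closedBall (0:E) ‖θ‖) subset_rfl hεpos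
  have hnull : ∀ Q : ProbabilityMeasure Ω',
      ((Q.map θ.continuous.measurable.aemeasurable : ProbabilityMeasure E) : Measure E)
        (⋃ i, A i)ᶜ = 0 := by
    intro Q
    refine le_antisymm (le_trans (measure_mono (compl_subset_compl.2 hcov)) ?_) zero_le
    rw [hsupp Q]
  -- quantitative bound for each n
  have hbound : ∀ n, |f (νs n : Measure E) - f (ν : Measure E)| ≤
      C * Real.sqrt (ε ^ 2 + (2 * (‖θ‖ + ε)) ^ 2 *
        ∑ i, |((νs n : Measure E) (A i)).toReal - ((ν : Measure E) (A i)).toReal|) := by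
    intro n
    exact abs_sub_le_of_partition f C hC hf _ _ A hmeasA hdisj
      (by positivity) hεpos.le hball hdiam (hnull (Ps n)) (hnull P)
  -- the error term tends to zero
  have hS : Tendsto (fun n => ∑ i, |((νs n : Measure E) (A i)).toReal
      - ((ν : Measure E) (A i)).toReal|) atTop (𝓝 0) := by
    have h0 : (0:ℝ) = ∑ i : Fin m, 0 := by simp
    rw [h0]
    refine tendsto_finset_sum _ (fun i _ => ?_)
    have hfr' : ν (frontier (A i)) = 0 := by
      have := hfr i
      have h2 : (ν (frontier (A i)) : ℝ≥0∞) = 0 := by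
        rw [ProbabilityMeasure.ennreal_coeFn_eq_coeFn_toMeasure]; exact this
      exact_mod_cast h2
    have htd : Tendsto (fun n => νs n (A i)) atTop (𝓝 (ν (A i))) :=
      ProbabilityMeasure.tendsto_measure_of_null_frontier_of_tendsto hmap hfr'
    have htd' : Tendsto (fun n => ((νs n (A i) : ℝ≥0) : ℝ)) atTop (𝓝 ((ν (A i) : ℝ≥0) : ℝ)) :=
      (NNReal.tendsto_coe).mpr htd
    have hrwv : ∀ Q : ProbabilityMeasure E, ((Q : Measure E) (A i)).toReal = ((Q (A i) : ℝ≥0) : ℝ) := by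
      intro Q
      rw [← ProbabilityMeasure.ennreal_coeFn_eq_coeFn_toMeasure]
      norm_cast
    simp only [hrwv]
    have := htd'.sub_const ((ν (A i) : ℝ≥0) : ℝ)
    rw [sub_self] at this
    simpa using this.abs
  -- conclude
  have hlim : Tendsto (fun n => C * Real.sqrt (ε ^ 2 + (2 * (‖θ‖ + ε)) ^ 2 *
      ∑ i, |((νs n : Measure E) (A i)).toReal - ((ν : Measure E) (A i)).toReal|)) atTop
      (𝓝 (C * Real.sqrt (ε ^ 2 + (2 * (‖θ‖ + ε)) ^ 2 * 0))) := by
    refine Tendsto.const_mul C ?_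
    exact (Real.continuous_sqrt.tendsto _).comp (tendsto_const_nhds.add (hS.const_mul _))
  have hlt : C * Real.sqrt (ε ^ 2 + (2 * (‖θ‖ + ε)) ^ 2 * 0) < ε' := by
    rw [mul_zero, add_zero, Real.sqrt_sq hεpos.le, hεdef, mul_div_assoc',
      div_lt_iff₀ (by positivity : (0:ℝ) < 2 * (C + 1))]
    nlinarith [hε', hC]
  have hev := hlim.eventually_lt_const hlt
  rw [eventually_atTop] at hev
  obtain ⟨N, hN⟩ := hev
  refine ⟨N, fun n hn => ?_⟩
  rw [Real.dist_eq]
  exact lt_of_le_of_lt (hbound n) (hN n hn)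

end Lem3

section Lem4

variable {E : Type*} [NormedAddCommGroup E] [MeasurableSpace E] [BorelSpace E]
  [SecondCountableTopology E]

lemma abs_sub_map_le [OpensMeasurableSpace Ω]
    (f : Measure E → ℝ) (C : ℝ) (hC : 0 ≤ C) (hf : W2Lipschitz f C)
    (ξ : Ω → E) (hξm : Measurable ξ) (θ : BoundedContinuousFunction Ω E)
    (P : Measure Ω) [IsProbabilityMeasure P]
    (hint : Integrable (fun ω => ‖ξ ω‖ ^ 2) P) {δ : ℝ} (hδ : 0 ≤ δ)
    (hL2 : ∫ ω, ‖ξ ω - θ ω‖ ^ 2 ∂P ≤ δ ^ 2) :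
    |f (P.map ξ) - f (P.map θ)| ≤ C * δ := by
  have hpairm : Measurable (fun ω => (ξ ω, θ ω)) := hξm.prodMk θ.continuous.measurable
  set ρ : Measure (E × E) := P.map (fun ω => (ξ ω, θ ω)) with hρ
  haveI : IsProbabilityMeasure ρ := Measure.isProbabilityMeasure_map hpairm.aemeasurable
  have hfst : ρ.map Prod.fst = P.map ξ := by
    rw [hρ, Measure.map_map measurable_fst hpairm]; rfl
  have hsnd : ρ.map Prod.snd = P.map (⇑θ) := by
    rw [hρ, Measure.map_map measurable_snd hpairm]; rfl
  have hint1 : Integrable (fun p : E × E => ‖p.1‖ ^ 2) ρ := by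
    rw [hρ, integrable_map_measure (show
      AEStronglyMeasurable (fun p : E × E => ‖p.1‖ ^ 2) _ from (continuous_fst.norm.pow 2).aestronglyMeasurable)
      hpairm.aemeasurable]
    simpa [Function.comp_def] using hint
  have hint2 : Integrable (fun p : E × E => ‖p.2‖ ^ 2) ρ := by
    rw [hρ, integrable_map_measure (show
      AEStronglyMeasurable (fun p : E × E => ‖p.2‖ ^ 2) _ from (continuous_snd.norm.pow 2).aestronglyMeasurable)
      hpairm.aemeasurable]
    have : Integrable (fun ω => ‖θ ω‖ ^ 2) P := by
      refine Integrable.mono' (integrable_const (‖θ‖ ^ 2))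
        ((θ.continuous.norm.pow 2).aestronglyMeasurable) ?_
      refine Filter.Eventually.of_forall (fun ω => ?_)
      rw [Real.norm_eq_abs, abs_of_nonneg (by positivity)]
      exact pow_le_pow_left₀ (norm_nonneg _) (θ.norm_coe_le_norm ω) 2
    simpa [Function.comp_def] using this
  have hcost : ∫ p : E × E, ‖p.1 - p.2‖ ^ 2 ∂ρ = ∫ ω, ‖ξ ω - θ ω‖ ^ 2 ∂P := by
    rw [hρ, integral_map hpairm.aemeasurable
      (show AEStronglyMeasurable (fun p : E × E => ‖p.1 - p.2‖ ^ 2) _ from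
        ((continuous_fst.sub continuous_snd).norm.pow 2).aestronglyMeasurable)]
  have hmain := hf ρ inferInstance hint1 hint2
  rw [hfst, hsnd, hcost] at hmain
  refine hmain.trans ?_
  refine mul_le_mul_of_nonneg_left ?_ hC
  calc Real.sqrt (∫ ω, ‖ξ ω - θ ω‖ ^ 2 ∂P) ≤ Real.sqrt (δ ^ 2) := Real.sqrt_le_sqrt hL2
    _ = δ := Real.sqrt_sq hδ

end Lem4

/-- if `f` is `W₂`-Lipschitz and `ξ ∈ L²(𝒮)` is `𝒮`-uniformly square
integrable, then `𝒫^f_{ξ} ≠ ∅`, i.e. the supremum defining `F_f(ξ)` is attained. -/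
theorem stmt_17 {Ω : Type*} [MeasurableSpace Ω] [TopologicalSpace Ω] [PolishSpace Ω]
    [BorelSpace Ω]
    (𝒮 : Set (ProbabilityMeasure Ω)) (h𝒮ne : 𝒮.Nonempty) (h𝒮c : IsCompact 𝒮)
    (k : ℕ) (hk : 1 ≤ k)
    (f : Measure (EuclideanSpace ℝ (Fin k)) → ℝ) (C : ℝ) (hC : 0 ≤ C)
    (hf : W2Lipschitz f C)
    (ξ : Ω → EuclideanSpace ℝ (Fin k)) (hξ : MemL2 𝒮 ξ)
    (hui : Tendsto
      (fun N : ℝ => ⨆ P : 𝒮,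
        ∫ ω in {ω | N ≤ ‖ξ ω‖}, ‖ξ ω‖ ^ 2 ∂((P : ProbabilityMeasure Ω) : Measure Ω))
      atTop (𝓝 0)) :
    (maximizersF 𝒮 f ξ).Nonempty ∧
      ∃ P ∈ 𝒮, f ((P : Measure Ω).map ξ) = Ff 𝒮 f ξ := by
  obtain ⟨hξm, hξint, hξapprox⟩ := hξ
  set g : ProbabilityMeasure Ω → ℝ := fun P => f ((P : Measure Ω).map ξ) with hg
  have happrox : ∀ n : ℕ, ∃ θ : BoundedContinuousFunction Ω (EuclideanSpace ℝ (Fin k)),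
      ∀ P ∈ 𝒮, ∫ ω, ‖ξ ω - θ ω‖ ^ 2 ∂(P : Measure Ω) ≤ (1 / ((n : ℝ) + 1)) ^ 2 :=
    fun n => hξapprox (1 / ((n : ℝ) + 1)) (by positivity)
  choose θs hθs using happrox
  have hunif : TendstoUniformlyOn
      (fun (n : ℕ) (P : ProbabilityMeasure Ω) => f ((P : Measure Ω).map (θs n))) g atTop 𝒮 := by
    rw [Metric.tendstoUniformlyOn_iff]
    intro ε hε
    have h2 : Tendsto (fun n : ℕ => C * (1 / ((n : ℝ) + 1))) atTop (𝓝 (C * 0)) :=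
      tendsto_one_div_add_atTop_nhds_zero_nat.const_mul C
    rw [mul_zero] at h2
    filter_upwards [h2.eventually_lt_const hε] with n hn P hP
    rw [Real.dist_eq]
    have hb := abs_sub_map_le f C hC hf ξ hξm (θs n) (P : Measure Ω) (hξint P hP)
      (by positivity : (0:ℝ) ≤ 1 / ((n : ℝ) + 1)) (hθs n P hP)
    exact lt_of_le_of_lt hb hn
  have hgcont : ContinuousOn g 𝒮 :=
    hunif.continuousOn (Filter.Eventually.of_forall fun n =>
      (continuous_f_map f C hC hf (θs n)).continuousOn).frequently
  obtain ⟨P₀, hP₀, hmax⟩ := h𝒮c.exists_isMaxOn h𝒮ne hgcont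
  have hmax' : ∀ P ∈ 𝒮, g P ≤ g P₀ := fun P hP => hmax hP
  haveI : Nonempty ↥𝒮 := h𝒮ne.to_subtype
  have hbdd : BddAbove (Set.range fun P : 𝒮 =>
      f (((P : ProbabilityMeasure Ω) : Measure Ω).map ξ)) := by
    refine ⟨g P₀, ?_⟩
    rintro x ⟨⟨P, hP⟩, rfl⟩
    exact hmax' P hP
  have hFf : f ((P₀ : Measure Ω).map ξ) = Ff 𝒮 f ξ := by
    refine le_antisymm (le_ciSup hbdd ⟨P₀, hP₀⟩) (ciSup_le ?_)
    rintro ⟨P, hP⟩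
    exact hmax' P hP
  exact ⟨⟨P₀, hP₀, hFf⟩, P₀, hP₀, hFf⟩
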